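/- For all i, j ∈ {1,2,3}, all m ∈ ℤ and all n ∈ ℤ with n ≠ 0, one has [β_{j,m}, x*_{i,n}] = −½ Σ_k ε_{ijk} x^k_{m+n} as endomorphisms of V. -/

import Mathlib

/-!
Every `β_{j,m}` acts on the `x^k_p` as a derivation with `[β_{j,m}, x^k_p] = δ_{jk} δ_{m+p,0}` and
commutes with `W^k`. Hence the bracket with `β_{i,n} + Σ ε_{ijk} x^j_n W^k` is
`(m+n) Σ_k ε_{ijk} x^k_{m+n}`: for `m+n ≠ 0` this is `[β_{j,m}, β_{i,n}]` rewritten through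
`α^k_p = -p x^k_p`, while for `m+n = 0` the `W`-terms of the two summands cancel. In the quadratic
sum only the terms `m' = m+n` and `m' = -m` survive, giving `(2m+n) Σ_k ε_{ijk} x^k_{m+n}`, so
`n x*_{i,n}` has bracket `-(n/2) Σ_k ε_{ijk} x^k_{m+n}` with `β_{j,m}`.
-/

open Finset

/-- Levi-Civita symbol on `{1,2,3}` (indexed by `Fin 3`). -/
def eps (i j k : Fin 3) : ℤ :=
  (((j : ℤ) - (i : ℤ)) * ((k : ℤ) - (i : ℤ)) * ((k : ℤ) - (j : ℤ))) / 2

variable {V : Type*} [AddCommGroup V] [Module ℂ V]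

/-- `x^i_n`: equals the given `x^i_0` for `n = 0`, and `−(1/n) α^i_n` for `n ≠ 0`. -/
noncomputable def xop (α : Fin 3 → ℤ → Module.End ℂ V) (x0 : Fin 3 → Module.End ℂ V)
    (i : Fin 3) (n : ℤ) : Module.End ℂ V :=
  if n = 0 then x0 i else (-(n : ℂ)⁻¹) • α i n

/-- `P_i = β_{i,0} + Σ_{j,k} ε_{ijk} x^j_0 W^k − ½ Σ_{j,k} ε_{ijk} Σ_{m∈ℤ} m x^j_{−m} x^k_m`,
defined pointwise on vectors (the inner sum has finitely many nonzero terms on each vector). -/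
noncomputable def Pop (α β : Fin 3 → ℤ → Module.End ℂ V) (x0 : Fin 3 → Module.End ℂ V)
    (i : Fin 3) : V → V := fun v =>
  β i 0 v + (∑ j : Fin 3, ∑ k : Fin 3, eps i j k • (x0 j) ((α k 0) v))
    - (2 : ℂ)⁻¹ • ∑ j : Fin 3, ∑ k : Fin 3, eps i j k •
        ∑ᶠ m : ℤ, (m : ℂ) • (xop α x0 j (-m)) ((xop α x0 k m) v)

/-- `x*_{i,n} = −(1/n)(β_{i,n} + Σ_{j,k} ε_{ijk} x^j_n W^k − ½ Σ_{j,k} ε_{ijk} Σ_m m x^j_{n−m} x^k_m)`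
for `n ≠ 0`, defined pointwise on vectors. -/
noncomputable def xstarop (α β : Fin 3 → ℤ → Module.End ℂ V) (x0 : Fin 3 → Module.End ℂ V)
    (i : Fin 3) (n : ℤ) : V → V := fun v =>
  (-(n : ℂ)⁻¹) • (β i n v + (∑ j : Fin 3, ∑ k : Fin 3, eps i j k • (xop α x0 j n) ((α k 0) v))
    - (2 : ℂ)⁻¹ • ∑ j : Fin 3, ∑ k : Fin 3, eps i j k •
        ∑ᶠ m : ℤ, (m : ℂ) • (xop α x0 j (n - m)) ((xop α x0 k m) v))

lemma eps_swap_right (i a b : Fin 3) : eps i a b = -eps i b a := by revert i a b; decide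

lemma eps_swap_left (i a b : Fin 3) : eps i a b = -eps a i b := by revert i a b; decide

lemma lie_apply_eq_sub {R M : Type*} [CommRing R] [AddCommGroup M] [Module R M]
    (f g : Module.End R M) (w : M) : ⁅f, g⁆ w = f (g w) - g (f w) := rfl

noncomputable def quadraticTerm (X : Fin 3 → ℤ → Module.End ℂ V) (a b : Fin 3) (n : ℤ)
    (v : V) : V :=
  ∑ᶠ m : ℤ, (m : ℂ) • X a (n - m) (X b m v)

noncomputable def xstarBody (α β : Fin 3 → ℤ → Module.End ℂ V) (x0 : Fin 3 → Module.End ℂ V)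
    (i : Fin 3) (n : ℤ) (v : V) : V :=
  β i n v + (∑ j : Fin 3, ∑ k : Fin 3, eps i j k • xop α x0 j n (α k 0 v))
    - (2 : ℂ)⁻¹ • ∑ j : Fin 3, ∑ k : Fin 3, eps i j k • quadraticTerm (xop α x0) j k n v

lemma xstarop_apply (α β : Fin 3 → ℤ → Module.End ℂ V) (x0 : Fin 3 → Module.End ℂ V)
    (i : Fin 3) (n : ℤ) (v : V) :
    xstarop α β x0 i n v = (-(n : ℂ)⁻¹) • xstarBody α β x0 i n v := rfl

lemma finsum_ite_eq_add_ite_eq {ι M : Type*} [DecidableEq ι] [AddCommMonoid M] (a b : ι) (x y : M) :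
    ∑ᶠ p : ι, ((if p = a then x else 0) + (if p = b then y else 0)) = x + y := by
  have hfin (c : ι) (z : M) : Function.HasFiniteSupport fun p : ι => if p = c then z else 0 :=
    (Set.finite_singleton c).subset fun p hp => by_contra fun h => hp (if_neg h)
  rw [finsum_add_distrib (hfin a x) (hfin b y), finsum_eq_single _ a fun p hp => if_neg hp,
    finsum_eq_single _ b fun p hp => if_neg hp, if_pos rfl, if_pos rfl]

section QuadraticTerm

variable {X B : Fin 3 → ℤ → Module.End ℂ V}

lemma finite_support_quadraticTerm (hcomm : ∀ a b p q, Commute (X a p) (X b q))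
    (hfin : ∀ v, ∃ N, ∀ c r, N ≤ r → X c r v = 0) (a b : Fin 3) (n : ℤ) (v : V) :
    Function.HasFiniteSupport fun m : ℤ => (m : ℂ) • X a (n - m) (X b m v) := by
  obtain ⟨N, hN⟩ := hfin v
  refine (Set.finite_Ioo (n - N) N).subset fun m hm => ?_
  by_contra hout
  simp only [Set.mem_Ioo, not_and_or, not_lt] at hout
  apply hm
  dsimp only
  rcases hout with hlow | hhigh
  · rw [← Module.End.mul_apply, (hcomm a b _ _).eq, Module.End.mul_apply, hN a _ (by omega),
      map_zero, smul_zero]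
  · rw [hN b m hhigh, map_zero, smul_zero]

lemma commutator_quadraticTerm_term
    (hB : ∀ j k m p w, B j m (X k p w) - X k p (B j m w) = if j = k ∧ m + p = 0 then w else 0)
    (j a b : Fin 3) (m n p : ℤ) (v : V) :
    B j m ((p : ℂ) • X a (n - p) (X b p v)) - (p : ℂ) • X a (n - p) (X b p (B j m v))
      = (if p = m + n then (if j = a then ((m + n : ℤ) : ℂ) • X b (m + n) v else 0) else 0)
        + (if p = -m then (if j = b then ((-m : ℤ) : ℂ) • X a (m + n) v else 0) else 0) := by
  have leibniz : B j m (X a (n - p) (X b p v)) - X a (n - p) (X b p (B j m v))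
      = (B j m (X a (n - p) (X b p v)) - X a (n - p) (B j m (X b p v)))
        + X a (n - p) (B j m (X b p v) - X b p (B j m v)) := by
    rw [map_sub]; abel
  rw [map_smul, ← smul_sub, leibniz, hB, hB, smul_add]
  congr 1
  · by_cases hp : p = m + n
    · subst hp; by_cases hj : j = a <;> simp [hj]
    · rw [if_neg hp, if_neg (by omega), smul_zero]
  · by_cases hp : p = -m
    · subst hp; by_cases hj : j = b <;> simp [hj, show n - -m = m + n by ring]
    · rw [if_neg hp, if_neg (by omega), map_zero, smul_zero]

lemma commutator_quadraticTerm (hcomm : ∀ a b p q, Commute (X a p) (X b q))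
    (hfin : ∀ v, ∃ N, ∀ c r, N ≤ r → X c r v = 0)
    (hB : ∀ j k m p w, B j m (X k p w) - X k p (B j m w) = if j = k ∧ m + p = 0 then w else 0)
    (j a b : Fin 3) (m n : ℤ) (v : V) :
    B j m (quadraticTerm X a b n v) - quadraticTerm X a b n (B j m v)
      = (if j = a then ((m + n : ℤ) : ℂ) • X b (m + n) v else 0)
        + (if j = b then ((-m : ℤ) : ℂ) • X a (m + n) v else 0) := by
  have hsupp := finite_support_quadraticTerm hcomm hfin a b n v
  unfold quadraticTerm
  rw [map_finsum (B j m) hsupp,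
    ← finsum_sub_distrib (hsupp.fun_comp (map_zero (B j m)))
      (finite_support_quadraticTerm hcomm hfin a b n (B j m v)),
    finsum_congr (commutator_quadraticTerm_term hB j a b m n · v), finsum_ite_eq_add_ite_eq]

lemma sum_eps_smul_commutator_quadraticTerm (hcomm : ∀ a b p q, Commute (X a p) (X b q))
    (hfin : ∀ v, ∃ N, ∀ c r, N ≤ r → X c r v = 0)
    (hB : ∀ j k m p w, B j m (X k p w) - X k p (B j m w) = if j = k ∧ m + p = 0 then w else 0)
    (i j : Fin 3) (m n : ℤ) (v : V) :
    B j m (∑ a : Fin 3, ∑ b : Fin 3, eps i a b • quadraticTerm X a b n v)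
      - ∑ a : Fin 3, ∑ b : Fin 3, eps i a b • quadraticTerm X a b n (B j m v)
      = ((m + n : ℤ) + m : ℂ) • ∑ k : Fin 3, eps i j k • X k (m + n) v := by
  simp only [map_sum, map_zsmul, ← Finset.sum_sub_distrib, ← smul_sub,
    commutator_quadraticTerm hcomm hfin hB, smul_add, Finset.sum_add_distrib, smul_ite, smul_zero]
  rw [Finset.sum_comm (f := fun a b => if j = b then _ else _)]
  simp only [Finset.sum_ite_irrel, Finset.sum_const_zero, Finset.sum_ite_eq, Finset.mem_univ,
    if_true, Finset.smul_sum, ← Finset.sum_add_distrib]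
  refine Finset.sum_congr rfl fun k _ => ?_
  rw [eps_swap_right i k j]
  push_cast
  module

end QuadraticTerm

section Relations

variable {α β : Fin 3 → ℤ → Module.End ℂ V} {x0 : Fin 3 → Module.End ℂ V}

lemma xop_commute (R1 : ∀ (i j : Fin 3) (m n : ℤ), ⁅α i m, α j n⁆ = 0)
    (R5a : ∀ (i j : Fin 3) (n : ℤ), ⁅α j n, x0 i⁆ = 0) (R5b : ∀ i j : Fin 3, ⁅x0 i, x0 j⁆ = 0)
    (a b : Fin 3) (p q : ℤ) : Commute (xop α x0 a p) (xop α x0 b q) := by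
  simp only [← commute_iff_lie_eq] at R1 R5a R5b
  unfold xop
  split_ifs
  · exact R5b a b
  · exact (R5a a b q).symm.smul_right _
  · exact (R5a b a p).smul_left _
  · exact ((R1 a b p q).smul_left _).smul_right _

lemma exists_xop_apply_eq_zero
    (R4 : ∀ v : V, ∃ N : ℤ, ∀ (i : Fin 3) (n : ℤ), N ≤ n → α i n v = 0 ∧ β i n v = 0) (v : V) :
    ∃ N : ℤ, ∀ c r, N ≤ r → xop α x0 c r v = 0 := by
  obtain ⟨N, hN⟩ := R4 v
  refine ⟨max N 1, fun c r hr => ?_⟩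
  rw [xop, if_neg (by omega), LinearMap.smul_apply, (hN c r (by omega)).1, smul_zero]

lemma lie_beta_xop
    (R2 : ∀ (i j : Fin 3) (m n : ℤ), ⁅β i m, α j n⁆
      = if i = j ∧ m + n = 0 then (m : ℂ) • (1 : Module.End ℂ V) else 0)
    (R6 : ∀ (i j : Fin 3) (n : ℤ), ⁅β j n, x0 i⁆
      = if i = j ∧ n = 0 then (1 : Module.End ℂ V) else 0)
    (j k : Fin 3) (m p : ℤ) :
    ⁅β j m, xop α x0 k p⁆ = if j = k ∧ m + p = 0 then 1 else 0 := by
  by_cases hp : p = 0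
  · rw [xop, if_pos hp, R6]
    exact if_congr (and_congr eq_comm (by omega)) rfl rfl
  · rw [xop, if_neg hp, Ring.lie_def, mul_smul_comm, smul_mul_assoc, ← smul_sub, ← Ring.lie_def,
      R2]
    by_cases hjk : j = k ∧ m + p = 0
    · have hm : (m : ℂ) = -p := by exact_mod_cast (by omega : m = -p)
      rw [if_pos hjk, if_pos hjk, smul_smul, hm, neg_mul_neg,
        inv_mul_cancel₀ (by exact_mod_cast hp), one_smul]
    · rw [if_neg hjk, if_neg hjk, smul_zero]

lemma beta_apply_xop_sub
    (R2 : ∀ (i j : Fin 3) (m n : ℤ), ⁅β i m, α j n⁆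
      = if i = j ∧ m + n = 0 then (m : ℂ) • (1 : Module.End ℂ V) else 0)
    (R6 : ∀ (i j : Fin 3) (n : ℤ), ⁅β j n, x0 i⁆
      = if i = j ∧ n = 0 then (1 : Module.End ℂ V) else 0)
    (j k : Fin 3) (m p : ℤ) (w : V) :
    β j m (xop α x0 k p w) - xop α x0 k p (β j m w) = if j = k ∧ m + p = 0 then w else 0 := by
  rw [← lie_apply_eq_sub, lie_beta_xop R2 R6]
  split_ifs <;> rfl

lemma commute_beta_alpha_zero
    (R2 : ∀ (i j : Fin 3) (m n : ℤ), ⁅β i m, α j n⁆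
      = if i = j ∧ m + n = 0 then (m : ℂ) • (1 : Module.End ℂ V) else 0)
    (j k : Fin 3) (m : ℤ) : Commute (β j m) (α k 0) := by
  rw [commute_iff_lie_eq, R2]
  split_ifs with h
  · rw [show m = 0 by omega, Int.cast_zero, zero_smul]
  · rfl

lemma alpha_eq_neg_smul_xop (a : Fin 3) {p : ℤ} (hp : p ≠ 0) :
    α a p = (-(p : ℂ)) • xop α x0 a p := by
  rw [xop, if_neg hp, smul_smul, neg_mul_neg, mul_inv_cancel₀ (by exact_mod_cast hp), one_smul]

lemma beta_apply_beta_sub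
    (R3 : ∀ (i j : Fin 3) (m n : ℤ), ⁅β i m, β j n⁆ = ∑ k : Fin 3, eps i j k • α k (m + n))
    (i j : Fin 3) (m n : ℤ) (v : V) :
    β j m (β i n v) - β i n (β j m v) = -∑ k : Fin 3, eps i j k • α k (m + n) v := by
  rw [← lie_apply_eq_sub, R3, ← Finset.sum_neg_distrib, LinearMap.sum_apply]
  refine Finset.sum_congr rfl fun k _ => ?_
  rw [eps_swap_left, neg_smul, LinearMap.neg_apply, LinearMap.smul_apply]

lemma commutator_sum_xop_alpha_zero
    (R2 : ∀ (i j : Fin 3) (m n : ℤ), ⁅β i m, α j n⁆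
      = if i = j ∧ m + n = 0 then (m : ℂ) • (1 : Module.End ℂ V) else 0)
    (R6 : ∀ (i j : Fin 3) (n : ℤ), ⁅β j n, x0 i⁆
      = if i = j ∧ n = 0 then (1 : Module.End ℂ V) else 0)
    (i j : Fin 3) (m n : ℤ) (v : V) :
    β j m (∑ a : Fin 3, ∑ b : Fin 3, eps i a b • xop α x0 a n (α b 0 v))
      - ∑ a : Fin 3, ∑ b : Fin 3, eps i a b • xop α x0 a n (α b 0 (β j m v))
      = if m + n = 0 then ∑ k : Fin 3, eps i j k • α k 0 v else 0 := by
  have hterm (a b : Fin 3) : β j m (xop α x0 a n (α b 0 v)) - xop α x0 a n (α b 0 (β j m v))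
      = if j = a ∧ m + n = 0 then α b 0 v else 0 := by
    rw [← Module.End.mul_apply (α b 0), ← (commute_beta_alpha_zero R2 j b m).eq,
      Module.End.mul_apply, beta_apply_xop_sub R2 R6]
  simp only [map_sum, map_zsmul, ← Finset.sum_sub_distrib, ← smul_sub, hterm]
  by_cases hmn : m + n = 0 <;> simp [hmn]

lemma commutator_beta_add_sum_xop_alpha_zero
    (R2 : ∀ (i j : Fin 3) (m n : ℤ), ⁅β i m, α j n⁆
      = if i = j ∧ m + n = 0 then (m : ℂ) • (1 : Module.End ℂ V) else 0)
    (R3 : ∀ (i j : Fin 3) (m n : ℤ), ⁅β i m, β j n⁆ = ∑ k : Fin 3, eps i j k • α k (m + n))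
    (R6 : ∀ (i j : Fin 3) (n : ℤ), ⁅β j n, x0 i⁆
      = if i = j ∧ n = 0 then (1 : Module.End ℂ V) else 0)
    (i j : Fin 3) (m n : ℤ) (v : V) :
    β j m (β i n v + ∑ a : Fin 3, ∑ b : Fin 3, eps i a b • xop α x0 a n (α b 0 v))
      - (β i n (β j m v) + ∑ a : Fin 3, ∑ b : Fin 3, eps i a b • xop α x0 a n (α b 0 (β j m v)))
      = ((m + n : ℤ) : ℂ) • ∑ k : Fin 3, eps i j k • xop α x0 k (m + n) v := by
  rw [map_add, add_sub_add_comm, beta_apply_beta_sub R3, commutator_sum_xop_alpha_zero R2 R6]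
  by_cases hmn : m + n = 0
  · rw [if_pos hmn, hmn, neg_add_cancel, Int.cast_zero, zero_smul]
  · rw [if_neg hmn, add_zero, Finset.smul_sum, ← Finset.sum_neg_distrib]
    refine Finset.sum_congr rfl fun k _ => ?_
    rw [alpha_eq_neg_smul_xop (α := α) (x0 := x0) k hmn, LinearMap.smul_apply, smul_comm]
    module

lemma commutator_xstarBody (R1 : ∀ (i j : Fin 3) (m n : ℤ), ⁅α i m, α j n⁆ = 0)
    (R2 : ∀ (i j : Fin 3) (m n : ℤ), ⁅β i m, α j n⁆
      = if i = j ∧ m + n = 0 then (m : ℂ) • (1 : Module.End ℂ V) else 0)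
    (R3 : ∀ (i j : Fin 3) (m n : ℤ), ⁅β i m, β j n⁆ = ∑ k : Fin 3, eps i j k • α k (m + n))
    (R4 : ∀ v : V, ∃ N : ℤ, ∀ (i : Fin 3) (n : ℤ), N ≤ n → α i n v = 0 ∧ β i n v = 0)
    (R5a : ∀ (i j : Fin 3) (n : ℤ), ⁅α j n, x0 i⁆ = 0)
    (R5b : ∀ i j : Fin 3, ⁅x0 i, x0 j⁆ = 0)
    (R6 : ∀ (i j : Fin 3) (n : ℤ), ⁅β j n, x0 i⁆
      = if i = j ∧ n = 0 then (1 : Module.End ℂ V) else 0)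
    (i j : Fin 3) (m n : ℤ) (v : V) :
    β j m (xstarBody α β x0 i n v) - xstarBody α β x0 i n (β j m v)
      = ((n : ℂ) / 2) • ∑ k : Fin 3, eps i j k • xop α x0 k (m + n) v := by
  have hlinear := commutator_beta_add_sum_xop_alpha_zero R2 R3 R6 i j m n v
  have hquadratic := sum_eps_smul_commutator_quadraticTerm (xop_commute R1 R5a R5b)
    (exists_xop_apply_eq_zero R4) (beta_apply_xop_sub R2 R6) i j m n v
  rw [xstarBody, xstarBody, map_sub, map_smul, sub_sub_sub_comm, ← smul_sub, hlinear, hquadratic]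
  push_cast
  module

end Relations

/-- `[β_{j,m}, x*_{i,n}] = −½ Σ_k ε_{ijk} x^k_{m+n}` (as endomorphisms, checked pointwise). -/
theorem beta_xstar_commutator
    (α β : Fin 3 → ℤ → Module.End ℂ V) (x0 : Fin 3 → Module.End ℂ V)
    (R1 : ∀ (i j : Fin 3) (m n : ℤ), ⁅α i m, α j n⁆ = 0)
    (R2 : ∀ (i j : Fin 3) (m n : ℤ), ⁅β i m, α j n⁆
      = if i = j ∧ m + n = 0 then (m : ℂ) • (1 : Module.End ℂ V) else 0)
    (R3 : ∀ (i j : Fin 3) (m n : ℤ), ⁅β i m, β j n⁆ = ∑ k : Fin 3, eps i j k • α k (m + n))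
    (R4 : ∀ v : V, ∃ N : ℤ, ∀ (i : Fin 3) (n : ℤ), N ≤ n → α i n v = 0 ∧ β i n v = 0)
    (R5a : ∀ (i j : Fin 3) (n : ℤ), ⁅α j n, x0 i⁆ = 0)
    (R5b : ∀ i j : Fin 3, ⁅x0 i, x0 j⁆ = 0)
    (R6 : ∀ (i j : Fin 3) (n : ℤ), ⁅β j n, x0 i⁆
      = if i = j ∧ n = 0 then (1 : Module.End ℂ V) else 0)
    (i j : Fin 3) (m n : ℤ) (hn : n ≠ 0) (v : V) :
    (β j m) (xstarop α β x0 i n v) - xstarop α β x0 i n ((β j m) v)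
      = -(2 : ℂ)⁻¹ • ∑ k : Fin 3, eps i j k • (xop α x0 k (m + n)) v := by
  rw [xstarop_apply, xstarop_apply, map_smul, ← smul_sub,
    commutator_xstarBody R1 R2 R3 R4 R5a R5b R6, smul_smul]
  congr 1
  field_simp
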